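/- arXiv:1304.6787 — 2 statements merged into one kernel-verified Lean document; each statement's English description precedes it below -/
import Mathlib

section
/- Let E, F, K be elements of an associative algebra over ℂ satisfying EF - FE = (K - K⁻¹)/(q_* - q_*⁻¹), KE = q_*² E K, KF = q_*⁻² F K, where q_* = iq and q is a complex number with q⁴ ≠ 1. Set ξ = [[0,1],[1,0]], η = [[0,i],[-i,0]], α = (q_* - q_*⁻¹)/(q - q⁻¹), and define in the (graded) tensor product algebra: 𝓔 = α E ⊗ ξ, 𝓕 = F ⊗ η, 𝓚 = K ⊗ iηξ. Then 𝓚𝓔 = q² 𝓔𝓚. -/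
/-!
`𝓔` and `𝓚` are both odd, but they are built from even `E, K` and odd `ξ, ηξ`, so moving
`E` past `ηξ` costs nothing while `ξ (ηξ) = -η` costs a sign. That sign cancels the one in
`q_*² = (iq)² = -q²` coming from `K E = q_*² E K`.
-/

open Complex

section Koszul

variable {B : Type*} [Ring B]

theorem mul_mul_eq_neg_of_anticommute {ξ η : B} (hξ2 : ξ * ξ = 1) (hξη : ξ * η + η * ξ = 0) :
    ξ * (η * ξ) = -η := by
  rw [← mul_assoc, eq_neg_of_add_eq_zero_left hξη, neg_mul, mul_assoc, hξ2, mul_one]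

theorem mul_mul_mul_self_eq_of_commute {K E ξ η : B} (hξ2 : ξ * ξ = 1)
    (hEξ : Commute E ξ) (hEη : Commute E η) :
    K * (η * ξ) * (E * ξ) = K * E * η := by
  rw [((hEη.mul_right hEξ).symm).mul_mul_mul_comm, mul_assoc η, hξ2, mul_one]

theorem mul_mul_mul_eq_neg_of_anticommute {K E ξ η : B} (hξ2 : ξ * ξ = 1)
    (hξη : ξ * η + η * ξ = 0) (hKξ : Commute K ξ) :
    E * ξ * (K * (η * ξ)) = -(E * K * η) := by
  rw [hKξ.symm.mul_mul_mul_comm, mul_mul_eq_neg_of_anticommute hξ2 hξη, mul_neg]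

end Koszul

theorem osp_KE_relation_general {B : Type*} [Ring B] [Algebra ℂ B]
    (q : ℂ)
    (E K ξ η : B)
    (hξ2 : ξ * ξ = 1) (hξη : ξ * η + η * ξ = 0)
    (hEξ : E * ξ = ξ * E) (hEη : E * η = η * E)
    (hKξ : K * ξ = ξ * K)
    (hKE : K * E = ((Complex.I * q) ^ 2) • (E * K)) :
    (Complex.I • (K * (η * ξ))) *
        ((((Complex.I * q) - (Complex.I * q)⁻¹) / (q - q⁻¹)) • (E * ξ)) =
      (q ^ 2) •
        (((((Complex.I * q) - (Complex.I * q)⁻¹) / (q - q⁻¹)) • (E * ξ)) *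
          (Complex.I • (K * (η * ξ)))) := by
  have hq_sq : (I * q) ^ 2 = -q ^ 2 := by rw [mul_pow, I_sq, neg_one_mul]
  have hKE_η : K * (η * ξ) * (E * ξ) = -q ^ 2 • (E * K * η) := by
    rw [mul_mul_mul_self_eq_of_commute hξ2 hEξ hEη, hKE, ← hq_sq, smul_mul_assoc]
  have hEK_η : E * ξ * (K * (η * ξ)) = -(E * K * η) :=
    mul_mul_mul_eq_neg_of_anticommute hξ2 hξη hKξ
  rw [smul_mul_smul_comm, smul_mul_smul_comm, hKE_η, hEK_η]
  module

/-- In the super tensor product algebra, with `E, F, K` even elements satisfying the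
`U_{q_*}(sl₂)` relations and odd elements `ξ, η` (anticommuting, squaring to 1,
commuting with the even elements `E, F, K` by the Koszul sign rule),
the element `𝓚 = K ⊗ iηξ` satisfies `𝓚𝓔 = q² 𝓔𝓚` where `𝓔 = α E ⊗ ξ`. -/
theorem osp_KE_relation {B : Type*} [Ring B] [Algebra ℂ B]
    (q : ℂ) (hq0 : q ≠ 0) (hq4 : q ^ 4 ≠ 1)
    (E F K Kinv ξ η : B)
    (hK : K * Kinv = 1) (hK' : Kinv * K = 1)
    (hξ2 : ξ * ξ = 1) (hη2 : η * η = 1) (hξη : ξ * η + η * ξ = 0)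
    (hEξ : E * ξ = ξ * E) (hEη : E * η = η * E)
    (hFξ : F * ξ = ξ * F) (hFη : F * η = η * F)
    (hKξ : K * ξ = ξ * K) (hKη : K * η = η * K)
    (hEF : E * F - F * E = ((Complex.I * q) - (Complex.I * q)⁻¹)⁻¹ • (K - Kinv))
    (hKE : K * E = ((Complex.I * q) ^ 2) • (E * K))
    (hKF : K * F = ((Complex.I * q) ^ 2)⁻¹ • (F * K)) :
    (Complex.I • (K * (η * ξ))) *
        ((((Complex.I * q) - (Complex.I * q)⁻¹) / (q - q⁻¹)) • (E * ξ)) =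
      (q ^ 2) •
        (((((Complex.I * q) - (Complex.I * q)⁻¹) / (q - q⁻¹)) • (E * ξ)) *
          (Complex.I • (K * (η * ξ)))) :=
  osp_KE_relation_general q E K ξ η hξ2 hξη hEξ hEη hKξ hKE
end

section
/- With the same setup, the anticommutator satisfies 𝓔𝓕 + 𝓕𝓔 = i(𝓚 - 𝓚⁻¹)/(q - q⁻¹). Hence 𝓔, 𝓕, 𝓚 satisfy the defining relations of U_q(osp(1|2)). -/
open Complex

/-! The Koszul signs make `𝓔𝓕 + 𝓕𝓔` equal to `α (EF - FE) ⊗ ξη`, since `ηξ = -ξη`. The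
`U_{q_*}(sl₂)` relation turns this into `α (K - K⁻¹) ⊗ ξη / (q_* - q_*⁻¹)`, and `α` is chosen
precisely so that this is `(K - K⁻¹) ⊗ ξη / (q - q⁻¹)`, which is also the right-hand side
once `ηξ` is rewritten as `-ξη`. -/

theorem mul_add_mul_eq_commutator_mul_of_anticommute {R : Type*} [Ring R] {a b x y : R}
    (hxb : Commute x b) (hya : Commute y a) (hxy : x * y + y * x = 0) :
    a * x * (b * y) + b * y * (a * x) = (a * b - b * a) * (x * y) := by
  rw [hxb.mul_mul_mul_comm, hya.mul_mul_mul_comm, eq_neg_of_add_eq_zero_right hxy, mul_neg,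
    ← sub_eq_add_neg, sub_mul]

theorem smul_mul_add_mul_smul {R A : Type*} [CommSemiring R] [Semiring A] [Algebra R A]
    (c : R) (x y : A) : c • x * y + y * c • x = c • (x * y + y * x) := by
  rw [smul_mul_assoc, mul_smul_comm, smul_add]

theorem I_mul_sub_inv_ne_zero {q : ℂ} (hq0 : q ≠ 0) (hq4 : q ^ 4 ≠ 1) :
    I * q - (I * q)⁻¹ ≠ 0 := by
  have hiq : I * q ≠ 0 := mul_ne_zero I_ne_zero hq0
  intro h
  apply hq4
  have hsq : (I * q) ^ 2 = 1 := by
    rw [sq, ← mul_inv_cancel₀ hiq, ← sub_eq_zero.mp h]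
  rw [mul_pow, I_sq] at hsq
  linear_combination (1 - q ^ 2) * hsq

theorem osp_EF_anticommutator_general {B : Type*} [Ring B] [Algebra ℂ B]
    (q : ℂ) (hq0 : q ≠ 0) (hq4 : q ^ 4 ≠ 1)
    (E F K Kinv ξ η : B)
    (hξη : ξ * η + η * ξ = 0)
    (hEη : E * η = η * E)
    (hFξ : F * ξ = ξ * F)
    (hEF : E * F - F * E = ((Complex.I * q) - (Complex.I * q)⁻¹)⁻¹ • (K - Kinv)) :
    (((((Complex.I * q) - (Complex.I * q)⁻¹) / (q - q⁻¹)) • (E * ξ)) * (F * η) +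
        (F * η) * ((((Complex.I * q) - (Complex.I * q)⁻¹) / (q - q⁻¹)) • (E * ξ))) =
      (Complex.I / (q - q⁻¹)) •
        ((Complex.I • (K * (η * ξ))) - ((-Complex.I) • (Kinv * (ξ * η)))) := by
  have hα := I_mul_sub_inv_ne_zero hq0 hq4
  have hηξ : η * ξ = -(ξ * η) := eq_neg_of_add_eq_zero_right hξη
  rw [smul_mul_add_mul_smul, mul_add_mul_eq_commutator_mul_of_anticommute hFξ.symm hEη.symm hξη,
    hEF, smul_mul_assoc, smul_smul, div_mul_eq_mul_div, mul_inv_cancel₀ hα, hηξ, sub_mul, mul_neg]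
  match_scalars
  · linear_combination (q - q⁻¹)⁻¹ * I_sq
  · linear_combination -(q - q⁻¹)⁻¹ * I_sq

/-- In the super tensor product algebra, with `E, F, K` even elements satisfying the
`U_{q_*}(sl₂)` relations and odd elements `ξ, η` (anticommuting, squaring to 1,
commuting with the even elements `E, F, K` by the Koszul sign rule),
the elements `𝓔 = α E ⊗ ξ`, `𝓕 = F ⊗ η`, `𝓚 = K ⊗ iηξ` satisfy the anticommutator relation `𝓔𝓕 + 𝓕𝓔 = i(𝓚 - 𝓚⁻¹)/(q - q⁻¹)` of `U_q(osp(1|2))`, with `𝓚⁻¹ = -i K⁻¹ ⊗ ξη`. -/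
theorem osp_EF_anticommutator {B : Type*} [Ring B] [Algebra ℂ B]
    (q : ℂ) (hq0 : q ≠ 0) (hq4 : q ^ 4 ≠ 1)
    (E F K Kinv ξ η : B)
    (hK : K * Kinv = 1) (hK' : Kinv * K = 1)
    (hξ2 : ξ * ξ = 1) (hη2 : η * η = 1) (hξη : ξ * η + η * ξ = 0)
    (hEξ : E * ξ = ξ * E) (hEη : E * η = η * E)
    (hFξ : F * ξ = ξ * F) (hFη : F * η = η * F)
    (hKξ : K * ξ = ξ * K) (hKη : K * η = η * K)
    (hEF : E * F - F * E = ((Complex.I * q) - (Complex.I * q)⁻¹)⁻¹ • (K - Kinv))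
    (hKE : K * E = ((Complex.I * q) ^ 2) • (E * K))
    (hKF : K * F = ((Complex.I * q) ^ 2)⁻¹ • (F * K)) :
    (((((Complex.I * q) - (Complex.I * q)⁻¹) / (q - q⁻¹)) • (E * ξ)) * (F * η) +
        (F * η) * ((((Complex.I * q) - (Complex.I * q)⁻¹) / (q - q⁻¹)) • (E * ξ))) =
      (Complex.I / (q - q⁻¹)) •
        ((Complex.I • (K * (η * ξ))) - ((-Complex.I) • (Kinv * (ξ * η)))) :=
  osp_EF_anticommutator_general q hq0 hq4 E F K Kinv ξ η hξη hEη hFξ hEF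
end
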